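/- arXiv:0711.2372 — 6 statements merged into one kernel-verified Lean document; each statement's English description precedes it below -/
import Mathlib

section
/- Two nonconstant polynomials f and g over ℂ have a common root if and only if their resultant Res(f, g) equals zero. -/
open Polynomial

/-- The Sylvester matrix of two polynomials `f, g` over `ℂ`, of size
`(m + n) × (m + n)` where `m = deg f`, `n = deg g`.  The first `n` columns
carry the coefficients of `f` (leading coefficient on the diagonal-top), the
last `m` columns carry the coefficients of `g`. -/
noncomputable def sylvester (f g : Polynomial ℂ) :
    Matrix (Fin (f.natDegree + g.natDegree)) (Fin (f.natDegree + g.natDegree)) ℂ :=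
  Matrix.of fun i j =>
    if (j : ℕ) < g.natDegree then
      -- column `j` built from `f`: entry in row `i` is `a_{i-j}` where
      -- `a_k = f.coeff (m - k)`, i.e. `f.coeff (m + j - i)`, for `j ≤ i ≤ j + m`.
      if (j : ℕ) ≤ (i : ℕ) ∧ (i : ℕ) ≤ (j : ℕ) + f.natDegree then
        f.coeff (f.natDegree + (j : ℕ) - (i : ℕ))
      else 0
    else
      -- column `n + j'` built from `g`: entry in row `i` is `g.coeff (n + j' - i)`
      -- for `j' ≤ i ≤ j' + n`, where `j' = j - n`.
      if (j : ℕ) - g.natDegree ≤ (i : ℕ) ∧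
          (i : ℕ) ≤ ((j : ℕ) - g.natDegree) + g.natDegree then
        g.coeff (g.natDegree + ((j : ℕ) - g.natDegree) - (i : ℕ))
      else 0

/-- The resultant of two polynomials: the determinant of their Sylvester matrix. -/
noncomputable def res (f g : Polynomial ℂ) : ℂ := (_root_.sylvester f g).det

/-! The matrix `sylvester f g` is Mathlib's Sylvester matrix `Polynomial.sylvester f g m n` with
the order of its rows and of its columns reversed, so `res f g` is Mathlib's
`Polynomial.resultant f g`. Over a field the resultant vanishes exactly when `f` and `g` are not
coprime, and over the algebraically closed field `ℂ` two polynomials fail to be coprime exactly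
when they have a common root. -/

theorem sylvester_eq_submatrix_rev (f g : ℂ[X]) :
    _root_.sylvester f g =
      (Polynomial.sylvester f g f.natDegree g.natDegree).submatrix Fin.rev Fin.rev := by
  ext i j
  obtain ⟨j, rfl⟩ := Fin.rev_surjective j
  simp only [_root_.sylvester, Polynomial.sylvester, Matrix.of_apply, Matrix.submatrix_apply,
    Fin.rev_rev]
  have hi := i.isLt
  refine Fin.addCases (fun k => ?_) (fun k => ?_) j <;>
  · have hk := k.isLt
    simp only [Fin.addCases_left, Fin.addCases_right, Fin.val_rev, Fin.val_castAdd,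
      Fin.val_natAdd, Set.mem_Icc]
    split_ifs <;> first | omega | rfl | (congr 1; omega)

theorem res_eq_resultant (f g : ℂ[X]) : res f g = resultant f g := by
  rw [res, sylvester_eq_submatrix_rev]
  exact Matrix.det_submatrix_equiv_self Fin.revPerm _

theorem common_root_iff_resultant_eq_zero_general (f g : Polynomial ℂ)
    (hf : 0 < f.natDegree) :
    (∃ z : ℂ, f.IsRoot z ∧ g.IsRoot z) ↔ res f g = 0 := by
  have hf0 : f ≠ 0 := ne_zero_of_natDegree_gt hf
  rw [res_eq_resultant, resultant_eq_zero_iff, isCoprime_iff_aeval_ne_zero_of_isAlgClosed ℂ ℂ]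
  simp [hf0, IsRoot]

/-- Two nonconstant polynomials `f` and `g` over `ℂ` have a common root if and
only if their resultant `Res(f, g)` equals zero. -/
theorem common_root_iff_resultant_eq_zero (f g : Polynomial ℂ)
    (hf : 0 < f.natDegree) (hg : 0 < g.natDegree) :
    (∃ z : ℂ, f.IsRoot z ∧ g.IsRoot z) ↔ res f g = 0 :=
  common_root_iff_resultant_eq_zero_general f g hf
end

section
/- Every root in the root system Φ of a Coxeter system (W, S) is either positive or negative: if f = Σ λ_s e_s ∈ Φ, then either λ_s ≥ 0 for all s or λ_s ≤ 0 for all s. -/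
open Real

/-- The coefficient `⟨e_s, e_t⟩ = -cos(π / m_{st})` of the canonical bilinear
form (`-1` when `m_{st} = ∞`, coded by `m s t = 0`). -/
noncomputable def canCoeff {S : Type*} (m : S → S → ℕ) (s t : S) : ℝ :=
  if m s t = 0 then -1 else -Real.cos (Real.pi / (m s t : ℝ))

/-- The canonical symmetric bilinear form on `V = S → ℝ`. -/
noncomputable def canForm {S : Type*} [Fintype S] (m : S → S → ℕ)
    (x y : S → ℝ) : ℝ :=
  ∑ s, ∑ t, x s * y t * canCoeff m s t

/-- The simple root `e_s`. -/
noncomputable def simpleRoot {S : Type*} [DecidableEq S] (s : S) : S → ℝ :=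
  Pi.single s 1

/-- The reflection `r_s(x) = x - 2⟨x, e_s⟩ e_s` of the canonical representation. -/
noncomputable def canRefl {S : Type*} [Fintype S] [DecidableEq S]
    (m : S → S → ℕ) (s : S) (x : S → ℝ) : S → ℝ :=
  x - (2 * canForm m x (simpleRoot s)) • simpleRoot s

/-- Membership in the root system `Φ = W·Π`: the smallest set of vectors
containing the simple roots and stable under all the reflections `r_s`
(since `W` is generated by the `r_s`, this is exactly the `W`-orbit of `Π`). -/
inductive IsRoot {S : Type*} [Fintype S] [DecidableEq S] (m : S → S → ℕ) :
    (S → ℝ) → Prop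
  | simple (s : S) : IsRoot m (simpleRoot s)
  | refl (s : S) (f : S → ℝ) : IsRoot m f → IsRoot m (canRefl m s f)

/-!
Let `W` be the Coxeter group of the Coxeter matrix `m`. The reflections `r_s` satisfy its
relations: `r_s r_t` fixes the orthogonal complement of `ℝ e_s + ℝ e_t` and acts on that plane
with order `m_{st}`. So they define a representation `σ` of `W`, and every root is `σ(w) e_s`.

We show `σ(w) e_s ≥ 0` whenever `ℓ(w s) > ℓ(w)`, by induction on `ℓ(w)` (Humphreys, §5.4).
Pick a right descent `t` of `w` and write `w = v u` with `u` a word in `s, t`,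
`ℓ(w) = ℓ(v) + |u|` and `ℓ(v)` minimal. Then neither `s` nor `t` is a right descent of `v`, so
by induction `σ(v)` maps `e_s` and `e_t` to nonnegative vectors. The word `u` is reduced and does
not end in `s`, so it is the alternating word `⋯ s t` of some length `k < m_{st}`, and
`σ(u) e_s` is a combination of `e_s, e_t` with coefficients `U_k(γ), U_{k-1}(γ)`, where `U` is the
Chebyshev polynomial of the second kind and `γ = cos(π / m_{st})` (or `γ = 1` if `m_{st} = ∞`).
Since `U_j(cos θ) sin θ = sin((j + 1) θ)`, these are nonnegative for `j < m_{st}`.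
If instead `ℓ(w s) < ℓ(w)`, then `σ(w) e_s = -σ(w s) e_s ≤ 0`.
-/

namespace Real

lemma sin_pi_div_pos {n : ℕ} (hn : 2 ≤ n) : 0 < sin (π / n) := by
  have hn' : (2 : ℝ) ≤ n := by exact_mod_cast hn
  apply sin_pos_of_pos_of_lt_pi (by positivity)
  rw [div_lt_iff₀ (by positivity)]
  nlinarith [pi_pos]

end Real

namespace Polynomial.Chebyshev

lemma U_eval_cos_pi_div_add_two_mul {n : ℕ} (hn : 2 ≤ n) (j : ℤ) :
    (U ℝ (j + 2 * n)).eval (cos (π / n)) = (U ℝ j).eval (cos (π / n)) := by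
  have hn0 : (n : ℝ) ≠ 0 := by positivity
  refine mul_right_cancel₀ (sin_pi_div_pos hn).ne' ?_
  rw [U_real_cos, U_real_cos, ← sin_add_two_pi (((j : ℝ) + 1) * (π / n))]
  congr 1
  push_cast
  field_simp
  ring

lemma U_eval_cos_pi_div_nonneg {n : ℕ} (hn : 2 ≤ n) {j : ℤ} (hj : -1 ≤ j) (hjn : j < n) :
    0 ≤ (U ℝ j).eval (cos (π / n)) := by
  have hn0 : (0 : ℝ) < n := by positivity
  refine (mul_nonneg_iff_of_pos_right (sin_pi_div_pos hn)).mp ?_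
  rw [U_real_cos]
  have hj' : (-1 : ℝ) ≤ j := by exact_mod_cast hj
  have hjn' : (j : ℝ) + 1 ≤ n := by exact_mod_cast hjn
  apply sin_nonneg_of_nonneg_of_le_pi (mul_nonneg (by linarith) (by positivity))
  calc ((j : ℝ) + 1) * (π / n) ≤ n * (π / n) := by gcongr
    _ = π := by field_simp

end Polynomial.Chebyshev

namespace CoxeterMatrix

open Polynomial Polynomial.Chebyshev CoxeterSystem

variable {S : Type*} (M : CoxeterMatrix S)

lemma canCoeff_self (a : S) : canCoeff M a a = 1 := by
  simp only [canCoeff, M.diagonal, one_ne_zero, if_false, Nat.cast_one, div_one, cos_pi, neg_neg]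

lemma canCoeff_comm (a b : S) : canCoeff M a b = canCoeff M b a := by
  unfold canCoeff
  rw [M.symmetric]

lemma two_le_of_ne_zero {a b : S} (hab : a ≠ b) (h0 : M a b ≠ 0) : 2 ≤ M a b := by
  have := M.off_diagonal a b hab
  omega

lemma neg_canCoeff_of_ne_zero {a b : S} (h0 : M a b ≠ 0) :
    -canCoeff M a b = cos (π / M a b) := by
  simp [canCoeff, h0]

lemma U_eval_neg_canCoeff_nonneg {a b : S} (hab : a ≠ b) {j : ℤ} (hj : -1 ≤ j)
    (hjM : M a b = 0 ∨ j < M a b) : 0 ≤ (U ℝ j).eval (-canCoeff M a b) := by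
  by_cases h0 : M a b = 0
  · simp only [canCoeff, h0, if_true, neg_neg, U_eval_one]
    linarith [(by exact_mod_cast hj : (-1 : ℝ) ≤ j)]
  · rw [neg_canCoeff_of_ne_zero M h0]
    exact U_eval_cos_pi_div_nonneg (M.two_le_of_ne_zero hab h0) hj (hjM.resolve_left h0)

variable [Fintype S] [DecidableEq S]

noncomputable def canBilin : LinearMap.BilinForm ℝ (S → ℝ) :=
  Matrix.toBilin' (Matrix.of (canCoeff M))

@[simp] lemma canBilin_apply (x y : S → ℝ) : M.canBilin x y = canForm M x y := by
  simp only [canBilin, Matrix.toBilin'_apply, canForm, Matrix.of_apply]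
  exact Finset.sum_congr rfl fun _ _ => Finset.sum_congr rfl fun _ _ => by ring

lemma canForm_simpleRoot_simpleRoot (a b : S) :
    canForm M (simpleRoot a) (simpleRoot b) = canCoeff M a b := by
  rw [← canBilin_apply, canBilin, simpleRoot, simpleRoot, Matrix.toBilin'_single, Matrix.of_apply]

noncomputable def canReflEnd (s : S) : Module.End ℝ (S → ℝ) :=
  Module.preReflection (simpleRoot s) (2 • M.canBilin.flip (simpleRoot s))

lemma canReflEnd_apply (s : S) (x : S → ℝ) : M.canReflEnd s x = canRefl M s x := by
  simp [canReflEnd, canRefl, Module.preReflection_apply]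

lemma canReflEnd_apply_self (s : S) : M.canReflEnd s (simpleRoot s) = -simpleRoot s := by
  rw [canReflEnd_apply]
  unfold canRefl
  rw [canForm_simpleRoot_simpleRoot, canCoeff_self]
  module

lemma canReflEnd_apply_smul_add_smul (a b : S) (A B : ℝ) :
    M.canReflEnd a (A • simpleRoot a + B • simpleRoot b) =
      (2 * -canCoeff M a b * B - A) • simpleRoot a + B • simpleRoot b := by
  rw [canReflEnd_apply]
  unfold canRefl
  rw [← canBilin_apply]
  simp only [map_add, map_smul, LinearMap.add_apply, LinearMap.smul_apply, canBilin_apply,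
    canForm_simpleRoot_simpleRoot, canCoeff_self, canCoeff_comm M b a, smul_eq_mul]
  module

lemma canReflEnd_mul_self (s : S) : M.canReflEnd s * M.canReflEnd s = 1 := by
  have h : (2 • M.canBilin.flip (simpleRoot s)) (simpleRoot s) = 2 := by
    simp [canForm_simpleRoot_simpleRoot, canCoeff_self]
  exact LinearMap.ext (Module.involutive_preReflection h)

noncomputable def wordRefl (ω : List S) : Module.End ℝ (S → ℝ) := (ω.map M.canReflEnd).prod

@[simp] lemma wordRefl_nil : M.wordRefl [] = 1 := rfl

lemma wordRefl_cons (s : S) (ω : List S) :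
    M.wordRefl (s :: ω) = M.canReflEnd s * M.wordRefl ω :=
  List.prod_cons

lemma wordRefl_concat (ω : List S) (s : S) :
    M.wordRefl (ω.concat s) = M.wordRefl ω * M.canReflEnd s := by
  simp [wordRefl]

theorem wordRefl_alternatingWord_apply_simpleRoot (a b : S) (k : ℕ) :
    M.wordRefl (alternatingWord a b k) (simpleRoot a) =
      if Even k then
        (U ℝ k).eval (-canCoeff M a b) • simpleRoot a +
          (U ℝ (k - 1)).eval (-canCoeff M a b) • simpleRoot b
      else
        (U ℝ (k - 1)).eval (-canCoeff M a b) • simpleRoot a +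
          (U ℝ k).eval (-canCoeff M a b) • simpleRoot b := by
  induction k with
  | zero => simp [alternatingWord]
  | succ k ih =>
    have hU := congrArg (eval (-canCoeff M a b)) (U_add_one ℝ k)
    simp only [eval_sub, eval_mul, eval_X, eval_ofNat] at hU
    rw [alternatingWord_succ', wordRefl_cons, Module.End.mul_apply, ih]
    by_cases hk : Even k
    · rw [if_pos hk, if_pos hk, if_neg (by simpa [Nat.even_add_one] using hk), add_comm,
        canReflEnd_apply_smul_add_smul, canCoeff_comm, add_comm]
      push_cast
      rw [add_sub_cancel_right, hU]
    · rw [if_neg hk, if_neg hk, if_pos (by simpa [Nat.even_add_one] using hk),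
        canReflEnd_apply_smul_add_smul]
      push_cast
      rw [add_sub_cancel_right, hU]

lemma exists_nonneg_wordRefl_alternatingWord_apply_simpleRoot {i t : S} (hit : i ≠ t) {k : ℕ}
    (hk : M i t = 0 ∨ k < M i t) : ∃ A B : ℝ, 0 ≤ A ∧ 0 ≤ B ∧
      M.wordRefl (alternatingWord i t k) (simpleRoot i) = A • simpleRoot i + B • simpleRoot t := by
  have hU : ∀ j : ℤ, -1 ≤ j → j ≤ k → 0 ≤ (U ℝ j).eval (-canCoeff M i t) := fun j hj hjk =>
    M.U_eval_neg_canCoeff_nonneg hit hj (hk.imp_right fun h => by omega)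
  have h1 := hU k (by omega) le_rfl
  have h2 := hU (k - 1) (by omega) (by omega)
  rw [wordRefl_alternatingWord_apply_simpleRoot]
  split_ifs
  exacts [⟨_, _, h1, h2, rfl⟩, ⟨_, _, h2, h1, rfl⟩]

lemma wordRefl_alternatingWord_two_mul (a b : S) (n : ℕ) :
    M.wordRefl (alternatingWord a b (2 * n)) = (M.canReflEnd a * M.canReflEnd b) ^ n := by
  induction n with
  | zero => rfl
  | succ n ih =>
    rw [mul_add_one, alternatingWord_succ, alternatingWord_succ, wordRefl_concat, wordRefl_concat,
      ih, pow_succ, mul_assoc]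

lemma wordRefl_alternatingWord_apply_of_orthogonal {a b : S} {z : S → ℝ}
    (ha : canForm M z (simpleRoot a) = 0) (hb : canForm M z (simpleRoot b) = 0) (k : ℕ) :
    M.wordRefl (alternatingWord a b k) z = z := by
  induction k generalizing a b with
  | zero => rfl
  | succ k ih =>
    rw [alternatingWord_succ, wordRefl_concat, Module.End.mul_apply, canReflEnd_apply]
    unfold canRefl
    rw [hb, mul_zero, zero_smul, sub_zero, ih hb ha]

lemma exists_eq_smul_add_smul_add_orthogonal (a b : S) (hab : canCoeff M a b ^ 2 ≠ 1)
    (x : S → ℝ) : ∃ (A B : ℝ) (z : S → ℝ), canForm M z (simpleRoot a) = 0 ∧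
      canForm M z (simpleRoot b) = 0 ∧ x = A • simpleRoot a + B • simpleRoot b + z := by
  have hden : 1 - canCoeff M a b ^ 2 ≠ 0 := sub_ne_zero.mpr hab.symm
  obtain ⟨A, hA⟩ : ∃ A, A = (canForm M x (simpleRoot a) -
      canCoeff M a b * canForm M x (simpleRoot b)) / (1 - canCoeff M a b ^ 2) := ⟨_, rfl⟩
  obtain ⟨B, hB⟩ : ∃ B, B = (canForm M x (simpleRoot b) -
      canCoeff M a b * canForm M x (simpleRoot a)) / (1 - canCoeff M a b ^ 2) := ⟨_, rfl⟩
  refine ⟨A, B, x - (A • simpleRoot a + B • simpleRoot b), ?_, ?_, by abel⟩ <;>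
  · rw [← canBilin_apply]
    simp only [map_sub, map_add, map_smul, LinearMap.sub_apply, LinearMap.add_apply,
      LinearMap.smul_apply, canBilin_apply, canForm_simpleRoot_simpleRoot, canCoeff_self,
      canCoeff_comm M b a, smul_eq_mul, hA, hB]
    field_simp
    ring

lemma canReflEnd_mul_pow_apply_simpleRoot_left {a b : S} (hab : a ≠ b) (h0 : M a b ≠ 0) :
    ((M.canReflEnd a * M.canReflEnd b) ^ M a b) (simpleRoot a) = simpleRoot a := by
  have hn := M.two_le_of_ne_zero hab h0
  have h1 := U_eval_cos_pi_div_add_two_mul hn 0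
  have h2 := U_eval_cos_pi_div_add_two_mul hn (-1)
  rw [zero_add, U_zero, eval_one] at h1
  rw [U_neg_one, eval_zero] at h2
  rw [← wordRefl_alternatingWord_two_mul, wordRefl_alternatingWord_apply_simpleRoot,
    if_pos (even_two_mul _), neg_canCoeff_of_ne_zero M h0]
  push_cast
  rw [h1, sub_eq_neg_add, h2, one_smul, zero_smul, add_zero]

lemma canReflEnd_mul_pow_apply_simpleRoot_right {a b : S} (hab : a ≠ b) (h0 : M a b ≠ 0) :
    ((M.canReflEnd a * M.canReflEnd b) ^ M a b) (simpleRoot b) = simpleRoot b := by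
  have hba := M.canReflEnd_mul_pow_apply_simpleRoot_left hab.symm (M.symmetric a b ▸ h0)
  rw [← M.symmetric] at hba
  have hconj : (M.canReflEnd a * M.canReflEnd b) ^ M a b =
      M.canReflEnd b * (M.canReflEnd b * M.canReflEnd a) ^ M a b * M.canReflEnd b := by
    have : SemiconjBy (M.canReflEnd b) (M.canReflEnd a * M.canReflEnd b)
        (M.canReflEnd b * M.canReflEnd a) := (mul_assoc _ _ _).symm
    rw [mul_assoc, ← (this.pow_right _).eq, ← mul_assoc, canReflEnd_mul_self, one_mul]
  rw [hconj, Module.End.mul_apply, Module.End.mul_apply, canReflEnd_apply_self, map_neg, hba,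
    map_neg, canReflEnd_apply_self, neg_neg]

lemma canReflEnd_mul_pow_eq_one {a b : S} (hab : a ≠ b) (h0 : M a b ≠ 0) :
    (M.canReflEnd a * M.canReflEnd b) ^ M a b = 1 := by
  have hc : canCoeff M a b ^ 2 ≠ 1 := by
    rw [← neg_sq, neg_canCoeff_of_ne_zero M h0]
    have := sin_pi_div_pos (M.two_le_of_ne_zero hab h0)
    nlinarith [sin_sq_add_cos_sq (π / M a b)]
  refine LinearMap.ext fun x => ?_
  obtain ⟨A, B, z, hza, hzb, rfl⟩ := M.exists_eq_smul_add_smul_add_orthogonal a b hc x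
  rw [map_add, map_add, map_smul, map_smul, canReflEnd_mul_pow_apply_simpleRoot_left M hab h0,
    canReflEnd_mul_pow_apply_simpleRoot_right M hab h0, ← wordRefl_alternatingWord_two_mul,
    wordRefl_alternatingWord_apply_of_orthogonal M hza hzb]
  rfl

lemma isLiftable_canReflEnd : M.IsLiftable M.canReflEnd := by
  intro a b
  rcases eq_or_ne a b with rfl | hab
  · rw [M.diagonal, pow_one, canReflEnd_mul_self]
  rcases eq_or_ne (M a b) 0 with h0 | h0
  · rw [h0, pow_zero]
  · exact M.canReflEnd_mul_pow_eq_one hab h0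

end CoxeterMatrix

namespace CoxeterSystem

open CoxeterMatrix

variable {S : Type*} {M : CoxeterMatrix S} {W : Type*} [Group W] (cs : CoxeterSystem M W)

local prefix:100 "s " => cs.simple
local prefix:100 "π " => cs.wordProd
local prefix:100 "ℓ " => cs.length

theorem eq_alternatingWord_of_isReduced {i t : S} {ω : List S} (hω : ∀ x ∈ ω, x = i ∨ x = t)
    (hred : cs.IsReduced ω) (hi : ¬cs.IsRightDescent (π ω) i) :
    ω = alternatingWord i t ω.length := by
  induction ω using List.reverseRecOn generalizing i t with
  | nil => rfl
  | append_singleton ω x ih =>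
    have hlen : ℓ (π ω * s x) = ω.length + 1 := by
      rw [← wordProd_concat, List.concat_eq_append, hred.eq, List.length_append,
        List.length_singleton]
    have hxt : x = t := by
      refine (hω x (by simp)).resolve_left ?_
      rintro rfl
      apply hi
      rw [IsRightDescent, wordProd_append, wordProd_singleton, simple_mul_simple_cancel_right, hlen]
      exact Nat.lt_succ_of_le (cs.length_wordProd_le ω)
    subst hxt
    have hω' : ω = alternatingWord x i ω.length := by
      refine ih (fun y hy => (hω y (by simp [hy])).symm) ?_ ?_
      · simpa [List.take_left'] using hred.take ω.length
      · rw [IsRightDescent, hlen, not_lt]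
        exact Nat.le_succ_of_le (cs.length_wordProd_le ω)
    rw [List.length_append, List.length_singleton, alternatingWord_succ, ← hω',
      List.concat_eq_append]

theorem lt_of_isReduced_alternatingWord {i t : S} (h0 : M i t ≠ 0) {k : ℕ}
    (hred : cs.IsReduced (alternatingWord i t k))
    (hi : ¬cs.IsRightDescent (π (alternatingWord i t k)) i) : k < M i t := by
  have hle : k ≤ M i t := not_lt.mp fun h => cs.not_isReduced_alternatingWord i t h0 h hred
  refine lt_of_le_of_ne hle fun hk => hi ?_
  obtain ⟨n, hn⟩ := Nat.exists_eq_add_one_of_ne_zero h0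
  have hbraid := cs.wordProd_braidWord_eq i t
  rw [braidWord, braidWord, M.symmetric t i, hn, alternatingWord_succ t i, wordProd_concat]
    at hbraid
  rw [hk, hn] at hred ⊢
  rw [IsRightDescent, hbraid, simple_mul_simple_cancel_right, ← hbraid, hred.eq,
    length_alternatingWord]
  exact Nat.lt_succ_of_le ((cs.length_wordProd_le _).trans (length_alternatingWord i t n).le)

theorem exists_factorization_not_isRightDescent (i t : S) (v : W) (ω : List S)
    (hω : ∀ x ∈ ω, x = i ∨ x = t) : ∃ (v' : W) (ω' : List S), (∀ x ∈ ω', x = i ∨ x = t) ∧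
      v' * π ω' = v * π ω ∧ ℓ v' + ω'.length = ℓ v + ω.length ∧
      ¬cs.IsRightDescent v' i ∧ ¬cs.IsRightDescent v' t := by
  induction hv : ℓ v using Nat.strong_induction_on generalizing v ω with
  | _ n ih =>
  by_cases hdesc : ∃ x, (x = i ∨ x = t) ∧ cs.IsRightDescent v x
  · obtain ⟨x, hx, hvx⟩ := hdesc
    have hlen := cs.isRightDescent_iff.mp hvx
    obtain ⟨v', ω', hω', hprod, hlen', hv'⟩ := ih _ (by omega) (v * s x) (x :: ω)
      (List.forall_mem_cons.mpr ⟨hx, hω⟩) rfl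
    refine ⟨v', ω', hω', ?_, ?_, hv'⟩
    · rw [hprod, wordProd_cons, ← mul_assoc, simple_mul_simple_cancel_right]
    · rw [hlen', List.length_cons]
      omega
  · push Not at hdesc
    exact ⟨v, ω, hω, rfl, hv.symm ▸ rfl, hdesc i (.inl rfl), hdesc t (.inr rfl)⟩

variable [Fintype S] [DecidableEq S]

noncomputable def canRep : W →* Module.End ℝ (S → ℝ) :=
  cs.lift ⟨M.canReflEnd, M.isLiftable_canReflEnd⟩

@[simp] lemma canRep_simple (i : S) : cs.canRep (s i) = M.canReflEnd i :=
  cs.lift_apply_simple _ i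

lemma canRep_wordProd (ω : List S) : cs.canRep (π ω) = M.wordRefl ω := by
  simp [wordProd, map_list_prod, wordRefl, Function.comp_def]

lemma exists_eq_canRep_apply_simpleRoot {f : S → ℝ} (hf : IsRoot M f) :
    ∃ (w : W) (i : S), f = cs.canRep w (simpleRoot i) := by
  induction hf with
  | simple i => exact ⟨1, i, by simp⟩
  | refl j f _ ih =>
    obtain ⟨w, i, rfl⟩ := ih
    exact ⟨s j * w, i, by rw [map_mul, Module.End.mul_apply, canRep_simple, canReflEnd_apply]⟩

theorem canRep_apply_simpleRoot_nonneg (w : W) (i : S) (hi : ¬cs.IsRightDescent w i) :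
    0 ≤ cs.canRep w (simpleRoot i) := by
  induction hw : ℓ w using Nat.strong_induction_on generalizing w i with
  | _ n ih =>
  rcases eq_or_ne w 1 with rfl | hw1
  · simp [simpleRoot, Pi.single_nonneg]
  obtain ⟨t, ht⟩ := cs.exists_rightDescent_of_ne_one hw1
  have hit : i ≠ t := by rintro rfl; exact hi ht
  obtain ⟨v, ω, hω, hprod, hlen, hvi, hvt⟩ :=
    cs.exists_factorization_not_isRightDescent i t w [] (by simp)
  rw [wordProd_nil, mul_one] at hprod
  rw [List.length_nil, add_zero] at hlen
  have hred : cs.IsReduced ω := le_antisymm (cs.length_wordProd_le ω) (by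
    have := cs.length_mul_le v (π ω)
    rw [hprod] at this
    omega)
  have hωi : ¬cs.IsRightDescent (π ω) i := fun h => hi (by
    have := cs.length_mul_le v (π ω * s i)
    rw [← mul_assoc, hprod] at this
    rw [IsRightDescent, hred.eq] at h
    exact lt_of_le_of_lt this (by omega))
  have hk : ω.length ≠ 0 := fun h => hvt (by
    rw [List.length_eq_zero_iff.mp h, wordProd_nil, mul_one] at hprod
    rwa [hprod])
  have hωalt := cs.eq_alternatingWord_of_isReduced hω hred hωi
  have hkM : M i t = 0 ∨ ω.length < M i t := or_iff_not_imp_left.mpr fun h0 =>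
    cs.lt_of_isReduced_alternatingWord h0 (hωalt ▸ hred) (hωalt ▸ hωi)
  obtain ⟨A, B, hA, hB, hAB⟩ := M.exists_nonneg_wordRefl_alternatingWord_apply_simpleRoot hit hkM
  rw [← hωalt, ← cs.canRep_wordProd] at hAB
  rw [← hprod, map_mul, Module.End.mul_apply, hAB, map_add, map_smul, map_smul]
  exact add_nonneg (smul_nonneg hA (ih _ (by omega) v i hvi rfl))
    (smul_nonneg hB (ih _ (by omega) v t hvt rfl))

theorem canRep_apply_simpleRoot_nonneg_or_nonpos (w : W) (i : S) :
    0 ≤ cs.canRep w (simpleRoot i) ∨ cs.canRep w (simpleRoot i) ≤ 0 := by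
  by_cases hi : cs.IsRightDescent w i
  · have h := cs.canRep_apply_simpleRoot_nonneg (w * s i) i
      (cs.isRightDescent_iff_not_isRightDescent_mul.mp hi)
    rw [map_mul, Module.End.mul_apply, canRep_simple, canReflEnd_apply_self, map_neg,
      neg_nonneg] at h
    exact .inr h
  · exact .inl (cs.canRep_apply_simpleRoot_nonneg w i hi)

end CoxeterSystem

/-- Every root of a Coxeter system is positive or negative: if
`f = Σ λ_s e_s ∈ Φ`, then either all `λ_s ≥ 0` or all `λ_s ≤ 0`. -/
theorem root_positive_or_negative {S : Type} [Fintype S] [DecidableEq S]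
    (m : S → S → ℕ) (hdiag : ∀ s, m s s = 1) (hsymm : ∀ s t, m s t = m t s)
    (hoff : ∀ s t, s ≠ t → m s t ≠ 1)
    (f : S → ℝ) (hf : IsRoot m f) :
    (∀ s, 0 ≤ f s) ∨ (∀ s, f s ≤ 0) := by
  let M : CoxeterMatrix S := ⟨m, Matrix.IsSymm.ext fun s t => hsymm t s, hdiag, hoff⟩
  obtain ⟨w, i, rfl⟩ := M.toCoxeterSystem.exists_eq_canRep_apply_simpleRoot (M := M) hf
  exact M.toCoxeterSystem.canRep_apply_simpleRoot_nonneg_or_nonpos w i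
end

section
/- For any two elements u, v of a Coxeter group W, there is a unique greatest lower bound w° with respect to the weak left order ≤_L: w° ≤_L u, w° ≤_L v, and every w with w ≤_L u and w ≤_L v satisfies w ≤_L w°. -/
/-- The weak left order on a Coxeter group: `u ≤_L v` iff there is `w` with
`v = uw` and `ℓ(v) = ℓ(u) + ℓ(w)`. -/
def weakLeftLE {B W : Type*} [Group W] {M : CoxeterMatrix B}
    (cs : CoxeterSystem M W) (u v : W) : Prop :=
  ∃ w : W, v = u * w ∧ cs.length v = cs.length u + cs.length w

/-!
The meet of `u` and `v` is a common lower bound `m` of maximal length. Every common lower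
bound `w` lies below `m`, by induction on `ℓ w`: a left descent `s` of `w` is a descent of `u`
and `v`, and also of `m`, since otherwise the lifting property would put the longer element
`s m` below both `u` and `v`; so the question passes to `s w` and the maximal common lower
bound `s m` of `s u` and `s v`.

The lifting property (if `w ≤ u` and `s` is a left descent of `u` but not of `w`, then
`s w ≤ u`) comes from the strong exchange condition, proved with the permutation
representation of `W` on `W × ZMod 2` in which `s` acts by `(t, ε) ↦ (s t s, ε + [t = s])`:
a word `ω` adds to `ε` the parity of the number of occurrences of `t` in its inversion
sequence, so that parity depends only on `π ω`.
-/

namespace CoxeterSystem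

open List

variable {B W : Type*} [Group W] {M : CoxeterMatrix B} (cs : CoxeterSystem M W)

local prefix:100 "s " => cs.simple
local prefix:100 "π " => cs.wordProd
local prefix:100 "ℓ " => cs.length
local prefix:100 "ris " => cs.rightInvSeq
local prefix:100 "lis " => cs.leftInvSeq

theorem prod_map_alternatingWord_two_mul {G : Type*} [Monoid G] (f : B → G) (i j : B) (p : ℕ) :
    ((alternatingWord i j (2 * p)).map f).prod = (f i * f j) ^ p := by
  induction p with
  | zero => simp [alternatingWord]
  | succ p ih =>
    have h₁ : ¬ Even (2 * p + 1) := by simp [parity_simps]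
    rw [show 2 * (p + 1) = 2 * p + 1 + 1 by ring, alternatingWord_succ', alternatingWord_succ',
      if_neg h₁, if_pos (even_two_mul p), map_cons, map_cons, prod_cons, prod_cons, ih, pow_succ',
      mul_assoc]

theorem reverse_alternatingWord_two_mul (i j : B) (p : ℕ) :
    (alternatingWord i j (2 * p)).reverse = alternatingWord j i (2 * p) := by
  induction p with
  | zero => rfl
  | succ p ih =>
    have h₁ : ¬ Even (2 * p + 1) := by simp [parity_simps]
    rw [show 2 * (p + 1) = 2 * p + 1 + 1 by ring, alternatingWord_succ', alternatingWord_succ',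
      if_neg h₁, if_pos (even_two_mul p), alternatingWord_succ, alternatingWord_succ, ← ih]
    simp

theorem wordProd_alternatingWord_add_two_mul (i j : B) (n : ℕ) :
    π (alternatingWord i j (n + 2 * M i j)) = π (alternatingWord i j n) := by
  have h₁ : (n + 2 * M i j) / 2 = n / 2 + M i j := by omega
  simp only [prod_alternatingWord_eq_mul_pow, h₁, pow_add, simple_mul_simple_pow, mul_one,
    Nat.even_add, even_two_mul, iff_true]

theorem leftInvSeq_alternatingWord_two_mul (i j : B) (p : ℕ) :
    lis (alternatingWord i j (2 * p)) =
      (range (2 * p)).map fun k => π (alternatingWord j i (2 * k + 1)) :=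
  ext_getElem (by simp) fun k hk _ => by
    simpa using cs.getElem_leftInvSeq_alternatingWord i j p k (by simpa using hk)

theorem even_count_rightInvSeq_alternatingWord [DecidableEq W] (i j : B) (t : W) :
    Even ((ris (alternatingWord i j (2 * M i j))).count t) := by
  have hperiod : ∀ k, π (alternatingWord i j (2 * (M i j + k) + 1)) =
      π (alternatingWord i j (2 * k + 1)) := fun k => by
    rw [show 2 * (M i j + k) + 1 = 2 * k + 1 + 2 * M i j by ring,
      wordProd_alternatingWord_add_two_mul]
  rw [← reverse_reverse (ris _), ← leftInvSeq_reverse, count_reverse,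
    reverse_alternatingWord_two_mul, leftInvSeq_alternatingWord_two_mul, two_mul, range_add,
    map_append, map_map, Function.comp_def]
  simp only [hperiod, count_append]
  exact ⟨_, rfl⟩

section ReflectionRepresentation

variable [DecidableEq W]

def reflectionPerm (i : B) : Equiv.Perm (W × ZMod 2) :=
  Function.Involutive.toPerm (fun p => (s i * p.1 * s i, p.2 + if p.1 = s i then 1 else 0))
    (by
      rintro ⟨t, ε⟩
      by_cases h : t = s i
      · subst h
        simp [add_assoc, show (1 : ZMod 2) + 1 = 0 from rfl]
      · simp [h, mul_assoc, mul_eq_one_iff_eq_inv])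

theorem reflectionPerm_apply (i : B) (t : W) (ε : ZMod 2) :
    cs.reflectionPerm i (t, ε) = (s i * t * s i, ε + if t = s i then 1 else 0) := rfl

theorem prod_map_reflectionPerm_apply (ω : List B) (t : W) (ε : ZMod 2) :
    (ω.map cs.reflectionPerm).prod (t, ε) =
      (π ω * t * (π ω)⁻¹, ε + (ris ω).count t) := by
  induction ω with
  | nil => simp
  | cons i ω ih =>
    have hcond : π ω * t * (π ω)⁻¹ = s i ↔ (π ω)⁻¹ * s i * π ω = t := by
      constructor
      · intro h
        rw [← h]
        group
      · rintro rfl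
        group
    simp only [map_cons, prod_cons, Equiv.Perm.mul_apply, ih, reflectionPerm_apply, rightInvSeq,
      count_cons, hcond, beq_iff_eq, wordProd_cons, mul_inv_rev, inv_simple]
    refine Prod.ext (by group) ?_
    split_ifs <;> push_cast <;> ring

theorem isLiftable_reflectionPerm : M.IsLiftable cs.reflectionPerm := by
  intro i j
  ext1 ⟨t, ε⟩
  have hone : π (alternatingWord i j (2 * M i j)) = 1 := by
    simpa [alternatingWord] using cs.wordProd_alternatingWord_add_two_mul i j 0
  rw [← prod_map_alternatingWord_two_mul, prod_map_reflectionPerm_apply, hone,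
    (ZMod.natCast_eq_zero_iff_even.mpr (cs.even_count_rightInvSeq_alternatingWord i j t))]
  simp

noncomputable def reflectionRep : W →* Equiv.Perm (W × ZMod 2) :=
  cs.lift ⟨cs.reflectionPerm, cs.isLiftable_reflectionPerm⟩

theorem reflectionRep_simple (i : B) : cs.reflectionRep (s i) = cs.reflectionPerm i :=
  cs.lift_apply_simple cs.isLiftable_reflectionPerm i

theorem reflectionRep_wordProd_apply (ω : List B) (t : W) (ε : ZMod 2) :
    cs.reflectionRep (π ω) (t, ε) = (π ω * t * (π ω)⁻¹, ε + (ris ω).count t) := by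
  rw [← prod_map_reflectionPerm_apply, wordProd, map_list_prod, map_map, Function.comp_def]
  simp only [reflectionRep_simple]

theorem reflectionRep_apply (w t : W) (ε : ZMod 2) :
    cs.reflectionRep w (t, ε) = (w * t * w⁻¹, ε + (cs.reflectionRep w (t, 0)).2) := by
  obtain ⟨ω, rfl⟩ := cs.wordProd_surjective w
  simp [reflectionRep_wordProd_apply]

theorem reflectionRep_apply_self {t : W} (ht : cs.IsReflection t) :
    cs.reflectionRep t (t, 0) = (t, 1) := by
  obtain ⟨p, i, rfl⟩ := ht
  set ρ := cs.reflectionRep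
  set a := (ρ p⁻¹ (p * s i * p⁻¹, 0)).2
  set b := (ρ p (s i, 0)).2
  have h₁ : ρ p⁻¹ (p * s i * p⁻¹, 0) = (s i, a) := by
    rw [reflectionRep_apply, Prod.mk.injEq]
    exact ⟨by group, zero_add a⟩
  have hab : a + b = 0 := by
    have h := congrArg (fun f : Equiv.Perm (W × ZMod 2) => (f (p * s i * p⁻¹, 0)).2)
      (map_mul ρ p p⁻¹)
    simp only [mul_inv_cancel, map_one, Equiv.Perm.one_apply, Equiv.Perm.mul_apply, h₁] at h
    rw [reflectionRep_apply] at h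
    exact h.symm
  calc ρ (p * s i * p⁻¹) (p * s i * p⁻¹, 0)
        = ρ p (ρ (s i) (ρ p⁻¹ (p * s i * p⁻¹, 0))) := by
        simp only [map_mul, Equiv.Perm.mul_apply]
    _ = (p * s i * p⁻¹, 1) := by
        rw [h₁, reflectionRep_simple, reflectionPerm_apply, if_pos rfl, simple_mul_simple_self,
          one_mul, reflectionRep_apply, Prod.mk.injEq]
        refine ⟨rfl, ?_⟩
        linear_combination hab

end ReflectionRepresentation

theorem mem_rightInvSeq_of_isRightInversion {ω : List B} {t : W}
    (h : cs.IsRightInversion (π ω) t) : t ∈ ris ω := by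
  classical
  obtain ⟨ω', hω', hω't⟩ := cs.exists_isReduced (π ω * t)
  have hnotMem : t ∉ ris ω' := fun hmem => by
    have := (cs.isRightInversion_of_mem_rightInvSeq hω' hmem).2
    rw [← hω't, mul_assoc, h.1.mul_self, mul_one] at this
    exact absurd h.2 this.not_gt
  have hcount : ((ris ω).count t : ZMod 2) = 1 := by
    have hω : π ω = π ω' * t := by rw [← hω't, mul_assoc, h.1.mul_self, mul_one]
    have := congrArg (fun w => (cs.reflectionRep w (t, 0)).2) hω
    simpa [reflectionRep_wordProd_apply, cs.reflectionRep_apply_self h.1,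
      count_eq_zero.mpr hnotMem] using this
  refine count_pos_iff.mp (Nat.pos_of_ne_zero fun h0 => ?_)
  simp [h0] at hcount

theorem mem_leftInvSeq_of_isLeftInversion {ω : List B} {t : W}
    (h : cs.IsLeftInversion (π ω) t) : t ∈ lis ω := by
  rw [← cs.isRightInversion_inv_iff, ← wordProd_reverse] at h
  simpa [rightInvSeq_reverse] using cs.mem_rightInvSeq_of_isRightInversion h

theorem leftInvSeq_append (ω ω' : List B) :
    lis (ω ++ ω') = lis ω ++ (lis ω').map (MulAut.conj (π ω)) := by
  induction ω with
  | nil => simp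
  | cons i ω ih =>
    simp [leftInvSeq, ih, map_map, wordProd_cons, Function.comp_def, mul_assoc]

local notation:50 a " ≤L " b => weakLeftLE cs a b

theorem one_weakLeftLE (w : W) : 1 ≤L w :=
  ⟨w, (one_mul w).symm, by rw [length_one, zero_add]⟩

theorem length_le_of_weakLeftLE {u v : W} (h : u ≤L v) : ℓ u ≤ ℓ v := by
  obtain ⟨x, rfl, hx⟩ := h
  omega

theorem eq_of_weakLeftLE_of_weakLeftLE {u v : W} (huv : u ≤L v) (hvu : v ≤L u) : u = v := by
  obtain ⟨x, rfl, hx⟩ := huv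
  have := cs.length_le_of_weakLeftLE hvu
  rw [cs.length_eq_zero_iff.mp (by omega : ℓ x = 0), mul_one]

theorem mul_weakLeftLE_mul {u v : W} (g : W) (h : u ≤L v)
    (hlen : ℓ (g * v) + ℓ u = ℓ (g * u) + ℓ v) : g * u ≤L g * v := by
  obtain ⟨x, rfl, hx⟩ := h
  exact ⟨x, by rw [mul_assoc], by rw [← mul_assoc] at hlen ⊢; omega⟩

variable {cs} in
theorem IsLeftDescent.of_weakLeftLE {u v : W} {i : B} (h : u ≤L v) (hu : cs.IsLeftDescent u i) :
    cs.IsLeftDescent v i := by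
  obtain ⟨x, rfl, hx⟩ := h
  have := cs.length_mul_le (s i * u) x
  rw [mul_assoc] at this
  unfold IsLeftDescent at hu ⊢
  omega

theorem simple_mul_weakLeftLE_simple_mul {u v : W} {i : B} (h : u ≤L v)
    (hu : cs.IsLeftDescent u i) : s i * u ≤L s i * v := by
  have hv := hu.of_weakLeftLE h
  rw [isLeftDescent_iff] at hu hv
  exact cs.mul_weakLeftLE_mul _ h (by omega)

theorem simple_mul_weakLeftLE_of_weakLeftLE_simple_mul {u v : W} {i : B} (h : u ≤L s i * v)
    (hv : cs.IsLeftDescent v i) : s i * u ≤L v := by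
  have hu : ¬ cs.IsLeftDescent u i := fun hu =>
    cs.isLeftDescent_iff_not_isLeftDescent_mul.mp hv (hu.of_weakLeftLE h)
  rw [isLeftDescent_iff_not_isLeftDescent_mul, not_isLeftDescent_iff,
    simple_mul_simple_cancel_left] at hv
  rw [not_isLeftDescent_iff] at hu
  simpa using cs.mul_weakLeftLE_mul (s i) h (by rw [simple_mul_simple_cancel_left]; omega)

theorem simple_mul_weakLeftLE_of_isLeftDescent {u v : W} {i : B} (h : u ≤L v)
    (hu : ¬ cs.IsLeftDescent u i) (hv : cs.IsLeftDescent v i) : s i * u ≤L v := by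
  obtain ⟨x, rfl, hx⟩ := h
  obtain ⟨ωu, hωu, rfl⟩ := cs.exists_isReduced u
  obtain ⟨ωx, hωx, rfl⟩ := cs.exists_isReduced x
  have hmem : s i ∈ lis (ωu ++ ωx) := cs.mem_leftInvSeq_of_isLeftInversion (by
    rwa [wordProd_append, isLeftInversion_simple_iff_isLeftDescent])
  rw [leftInvSeq_append, mem_append] at hmem
  rcases hmem with hmem | hmem
  · exact absurd ((cs.isLeftInversion_simple_iff_isLeftDescent _ _).mp
      (cs.isLeftInversion_of_mem_leftInvSeq hωu hmem)) hu
  · obtain ⟨r, hr, hri⟩ := mem_map.mp hmem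
    have hrx := (cs.isLeftInversion_of_mem_leftInvSeq hωx hr).2
    have hconj : s i * π ωu = π ωu * r := by
      rw [← hri, MulAut.conj_apply]
      group
    have hsplit : π ωu * π ωx = s i * π ωu * (r * π ωx) := by
      rw [hconj, mul_assoc, ← mul_assoc r, (cs.isReflection_of_mem_leftInvSeq ωx hr).mul_self,
        one_mul]
    have := cs.length_mul_le (s i * π ωu) (r * π ωx)
    rw [not_isLeftDescent_iff] at hu
    refine ⟨r * π ωx, hsplit, ?_⟩
    rw [← hsplit] at this
    omega

theorem weakLeftLE_of_forall_length_le {u v m w : W} (hmu : m ≤L u) (hmv : m ≤L v)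
    (hmax : ∀ z, (z ≤L u) → (z ≤L v) → ℓ z ≤ ℓ m) (hwu : w ≤L u) (hwv : w ≤L v) :
    w ≤L m := by
  induction hn : ℓ w generalizing u v m w with
  | zero => rw [cs.length_eq_zero_iff.mp hn]; exact cs.one_weakLeftLE m
  | succ n ih =>
    obtain ⟨i, hwi⟩ := cs.exists_leftDescent_of_ne_one (w := w) (by rintro rfl; simp at hn)
    have hui := hwi.of_weakLeftLE hwu
    have hvi := hwi.of_weakLeftLE hwv
    have hmi : cs.IsLeftDescent m i := by
      by_contra hmi
      have := hmax _ (cs.simple_mul_weakLeftLE_of_isLeftDescent hmu hmi hui)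
        (cs.simple_mul_weakLeftLE_of_isLeftDescent hmv hmi hvi)
      rw [not_isLeftDescent_iff] at hmi
      omega
    have hmax' : ∀ z, (z ≤L s i * u) → (z ≤L s i * v) → ℓ z ≤ ℓ (s i * m) := by
      intro z hzu hzv
      have hzi : ¬ cs.IsLeftDescent z i := fun hzi =>
        cs.isLeftDescent_iff_not_isLeftDescent_mul.mp hui (hzi.of_weakLeftLE hzu)
      have := hmax _ (cs.simple_mul_weakLeftLE_of_weakLeftLE_simple_mul hzu hui)
        (cs.simple_mul_weakLeftLE_of_weakLeftLE_simple_mul hzv hvi)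
      rw [not_isLeftDescent_iff] at hzi
      rw [isLeftDescent_iff] at hmi
      omega
    have hsw := ih (cs.simple_mul_weakLeftLE_simple_mul hmu hmi)
      (cs.simple_mul_weakLeftLE_simple_mul hmv hmi) hmax'
      (cs.simple_mul_weakLeftLE_simple_mul hwu hwi) (cs.simple_mul_weakLeftLE_simple_mul hwv hwi)
      (by rw [isLeftDescent_iff] at hwi; omega)
    simpa using cs.simple_mul_weakLeftLE_of_weakLeftLE_simple_mul hsw hmi

theorem exists_weakLeftLE_forall_length_le (u v : W) :
    ∃ m, (m ≤L u) ∧ (m ≤L v) ∧ ∀ z, (z ≤L u) → (z ≤L v) → ℓ z ≤ ℓ m := by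
  obtain ⟨m, ⟨hmu, hmv⟩, hmin⟩ := (measure fun z => ℓ u - ℓ z).wf.has_min
    {z | (z ≤L u) ∧ (z ≤L v)} ⟨1, cs.one_weakLeftLE u, cs.one_weakLeftLE v⟩
  refine ⟨m, hmu, hmv, fun z hzu hzv => ?_⟩
  have : ¬ ℓ u - ℓ z < ℓ u - ℓ m := hmin z ⟨hzu, hzv⟩
  have := cs.length_le_of_weakLeftLE hzu
  omega

end CoxeterSystem

/-- Any two elements `u, v` of a Coxeter group have a unique greatest lower
bound for the weak left order `≤_L`. -/
theorem exists_unique_weak_left_meet {B W : Type} [Group W]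
    {M : CoxeterMatrix B} (cs : CoxeterSystem M W) (u v : W) :
    ∃! w0 : W, weakLeftLE cs w0 u ∧ weakLeftLE cs w0 v ∧
      ∀ w : W, weakLeftLE cs w u → weakLeftLE cs w v → weakLeftLE cs w w0 := by
  obtain ⟨m, hmu, hmv, hmax⟩ := cs.exists_weakLeftLE_forall_length_le u v
  have hmeet := fun w => cs.weakLeftLE_of_forall_length_le (w := w) hmu hmv hmax
  exact ⟨m, ⟨hmu, hmv, hmeet⟩, fun y ⟨hyu, hyv, hy⟩ =>
    cs.eq_of_weakLeftLE_of_weakLeftLE (hmeet y hyu hyv) (hy m hmu hmv)⟩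
end

section
/- Every Garside group is torsion free: if G = G(M) is the group of fractions of a Garside monoid M and α ∈ G satisfies α^n = 1 for some n ≥ 1, then α = 1. -/
/-- Left divisibility in a monoid: `a ≤_L b` iff `ac = b` for some `c`. -/
def divL {M : Type*} [Monoid M] (a b : M) : Prop := ∃ c : M, a * c = b

/-- Right divisibility in a monoid: `a ≤_R b` iff `ca = b` for some `c`. -/
def divR {M : Type*} [Monoid M] (a b : M) : Prop := ∃ c : M, c * a = b

/-- `M` is a Garside monoid: atomic, finitely generated, cancelative, the left
and right divisibility orders are lattices, and there is a Garside element `Δ`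
whose sets of left and of right divisors coincide and generate `M`. -/
structure IsGarsideMonoid (M : Type*) [Monoid M] : Prop where
  atomic : ∃ ν : M → ℕ, (∀ a : M, ν a = 0 ↔ a = 1) ∧
    ∀ a b : M, ν a + ν b ≤ ν (a * b)
  finGen : ∃ T : Finset M, Submonoid.closure (T : Set M) = ⊤
  cancel : ∀ a b b' c : M, a * b * c = a * b' * c → b = b'
  meetL : ∀ a b : M, ∃ d : M, divL d a ∧ divL d b ∧
    ∀ e : M, divL e a → divL e b → divL e d
  joinL : ∀ a b : M, ∃ u : M, divL a u ∧ divL b u ∧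
    ∀ v : M, divL a v → divL b v → divL u v
  meetR : ∀ a b : M, ∃ d : M, divR d a ∧ divR d b ∧
    ∀ e : M, divR e a → divR e b → divR e d
  joinR : ∀ a b : M, ∃ u : M, divR a u ∧ divR b u ∧
    ∀ v : M, divR a v → divR b v → divR u v
  garside : ∃ Δ : M, {a : M | divL a Δ} = {a : M | divR a Δ} ∧
    Submonoid.closure {a : M | divL a Δ} = ⊤

/-- The defining relations of the group of fractions `G(M)` of a monoid `M`:
generators all elements of `M`, relations `α·β = αβ`. -/
def fracRels (M : Type*) [Monoid M] : Set (FreeGroup M) :=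
  ⋃ (a : M) (b : M), {FreeGroup.of a * FreeGroup.of b * (FreeGroup.of (a * b))⁻¹}

/-- The group of fractions `G(M)` of a monoid `M`. -/
abbrev FracGroup (M : Type*) [Monoid M] := PresentedGroup (fracRels M)

/-!
Since any two elements of `M` have a common left multiple, `M` is a left Ore monoid: it embeds
into `G(M)`, and every element of `G(M)` is a left fraction `a⁻¹b`. Left divisibility therefore
extends to a left-invariant order on `G(M)` (`g ≤ h` iff `g⁻¹h ∈ M`), in which two elements
`a⁻¹b, a⁻¹c` have the join `a⁻¹(b ∨ c)`. If `α` has finite order, its powers form a finite set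
with a least upper bound `β`; left multiplication by `α` is an order automorphism permuting the
powers, so `αβ = β`, i.e. `α = 1`.
-/

open OreLocalization

theorem OreLocalization.numeratorHom_injective {R : Type*} [Monoid R] [IsLeftCancelMul R]
    {S : Submonoid R} [OreSet S] : Function.Injective (numeratorHom : R →* R[S⁻¹]) := by
  intro a b hab
  obtain ⟨u, v, hba, huv⟩ := oreDiv_eq_iff.1 hab
  simp only [OneMemClass.coe_one, mul_one] at huv
  rw [Submonoid.smul_def, smul_eq_mul, smul_eq_mul, ← huv] at hba
  exact (mul_left_cancel hba).symm

theorem Set.Finite.exists_isLUB {α : Type*} [SemilatticeSup α] {s : Set α} (hs : s.Finite)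
    (hne : s.Nonempty) : ∃ a, IsLUB s a :=
  ⟨_, by simpa using Finset.isLUB_sup' (hs.toFinset_nonempty.2 hne)⟩

theorem eq_one_of_isLUB_zpowers {G : Type*} [Group G] [PartialOrder G] [MulLeftMono G]
    {a b : G} (h : IsLUB (Subgroup.zpowers a : Set G) b) : a = 1 := by
  have himage : OrderIso.mulLeft a '' (Subgroup.zpowers a : Set G) = Subgroup.zpowers a :=
    Set.image_smul.trans (smul_coe_set (Subgroup.mem_zpowers a))
  have hab : IsLUB (Subgroup.zpowers a : Set G) (a * b) := by
    rw [← himage]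
    exact (OrderIso.mulLeft a).isLUB_image'.2 h
  exact mul_eq_right.1 (hab.unique h)

namespace IsGarsideMonoid

variable {M : Type*} [Monoid M]

theorem isCancelMul (hM : IsGarsideMonoid M) : IsCancelMul M where
  mul_left_cancel a b c h := hM.cancel a b c 1 (by simpa using h)
  mul_right_cancel a b c h := hM.cancel 1 b c a (by simpa using h)

theorem eq_one_of_mul_eq_one (hM : IsGarsideMonoid M) {a b : M} (h : a * b = 1) : a = 1 := by
  obtain ⟨ν, hν_eq_zero, hν_mul⟩ := hM.atomic
  have := hν_mul a b
  rw [h, (hν_eq_zero 1).2 rfl] at this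
  exact (hν_eq_zero a).1 (by omega)

theorem exists_mul_eq_mul (hM : IsGarsideMonoid M) (a b : M) : ∃ u v : M, u * a = v * b := by
  obtain ⟨w, ⟨u, hu⟩, ⟨v, hv⟩, -⟩ := hM.joinR a b
  exact ⟨u, v, hu.trans hv.symm⟩

noncomputable abbrev oreSetTop (hM : IsGarsideMonoid M) : OreSet (⊤ : Submonoid M) :=
  haveI := hM.isCancelMul
  { ore_right_cancel _ _ _ h := ⟨1, by rw [mul_right_cancel h]⟩
    oreNum r s := (hM.exists_mul_eq_mul r s).choose_spec.choose
    oreDenom r s := ⟨(hM.exists_mul_eq_mul r s).choose, trivial⟩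
    ore_eq r s := (hM.exists_mul_eq_mul r s).choose_spec.choose_spec }

end IsGarsideMonoid

namespace FracGroup

variable {M : Type*} [Monoid M]

theorem of_mul_of (a b : M) :
    (PresentedGroup.of a * PresentedGroup.of b : FracGroup M) = PresentedGroup.of (a * b) :=
  mul_inv_eq_one.1 <| PresentedGroup.one_of_mem <| Set.mem_iUnion₂.2 ⟨a, b, rfl⟩

def of : M →* FracGroup M where
  toFun := PresentedGroup.of
  map_one' := (mul_eq_left (a := (PresentedGroup.of 1 : FracGroup M))).1 <| by
    rw [of_mul_of, mul_one]
  map_mul' a b := (of_mul_of a b).symm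

def lift {H : Type*} [Group H] (f : M →* H) : FracGroup M →* H :=
  PresentedGroup.toGroup (f := f) <| by
    intro r hr
    simp only [fracRels, Set.mem_iUnion, Set.mem_singleton_iff] at hr
    obtain ⟨a, b, rfl⟩ := hr
    simp

@[simp]
theorem lift_of {H : Type*} [Group H] (f : M →* H) (a : M) : lift f (of a) = f a :=
  PresentedGroup.toGroup.of _

theorem of_injective (hM : IsGarsideMonoid M) : Function.Injective (of : M → FracGroup M) := by
  have := hM.isCancelMul
  let := hM.oreSetTop
  let ι : M →* (OreLocalization (⊤ : Submonoid M) M)ˣ :=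
    IsUnit.liftRight numeratorHom fun r ↦ numerator_isUnit ⟨r, Submonoid.mem_top r⟩
  refine Function.Injective.of_comp (f := lift ι) fun a b hab ↦ numeratorHom_injective (S := ⊤) ?_
  exact congrArg Units.val (by simpa using hab : ι a = ι b)

theorem exists_mul_inv_eq_inv_mul (hM : IsGarsideMonoid M) (b c : M) :
    ∃ u v : M, of b * (of c)⁻¹ = (of u)⁻¹ * of v := by
  obtain ⟨u, v, h⟩ := hM.exists_mul_eq_mul b c
  refine ⟨u, v, ?_⟩
  rw [mul_inv_eq_iff_eq_mul, mul_assoc, eq_inv_mul_iff_mul_eq, ← map_mul, ← map_mul, h]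

theorem exists_inv_mul_eq (hM : IsGarsideMonoid M) (g : FracGroup M) :
    ∃ a b : M, (of a)⁻¹ * of b = g := by
  have hg : g ∈ Subgroup.closure (Set.range of) := by
    rw [show (of : M → FracGroup M) = PresentedGroup.of from rfl, PresentedGroup.closure_range_of]
    exact Subgroup.mem_top g
  induction hg using Subgroup.closure_induction with
  | mem _ hg =>
    obtain ⟨b, rfl⟩ := hg
    exact ⟨1, b, by simp⟩
  | one => exact ⟨1, 1, by simp⟩
  | mul _ _ _ _ hg hh =>
    obtain ⟨a, b, rfl⟩ := hg
    obtain ⟨c, d, rfl⟩ := hh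
    obtain ⟨u, v, huv⟩ := exists_mul_inv_eq_inv_mul hM b c
    refine ⟨u * a, v * d, ?_⟩
    rw [map_mul, map_mul, mul_inv_rev]
    simp only [mul_assoc]
    rw [← mul_assoc (of b), huv]
    simp only [mul_assoc]
  | inv _ _ hg =>
    obtain ⟨a, b, rfl⟩ := hg
    exact ⟨b, a, by simp⟩

instance : Preorder (FracGroup M) where
  le g h := ∃ m : M, g * of m = h
  le_refl g := ⟨1, by simp⟩
  le_trans _ _ _ := fun ⟨m, hm⟩ ⟨m', hm'⟩ ↦ ⟨m * m', by rw [map_mul, ← mul_assoc, hm, hm']⟩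

instance : MulLeftMono (FracGroup M) where
  elim w _ _ := fun ⟨m, hm⟩ ↦ ⟨m, by rw [mul_assoc, hm]⟩

theorem of_le_of_iff (hM : IsGarsideMonoid M) {a b : M} : of a ≤ of b ↔ divL a b := by
  constructor
  · rintro ⟨m, hm⟩
    exact ⟨m, of_injective hM (by rw [map_mul, hm])⟩
  · rintro ⟨m, rfl⟩
    exact ⟨m, (map_mul _ _ _).symm⟩

theorem exists_eq_of_of_of_le {a : M} {g : FracGroup M} (h : of a ≤ g) : ∃ m : M, g = of m :=
  let ⟨m, hm⟩ := h
  ⟨a * m, by rw [map_mul, hm]⟩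

theorem le_antisymm_of_isGarsideMonoid (hM : IsGarsideMonoid M) {g h : FracGroup M}
    (hgh : g ≤ h) (hhg : h ≤ g) : g = h := by
  obtain ⟨m, rfl⟩ := hgh
  obtain ⟨m', hm'⟩ := hhg
  have : of (m * m') = of 1 := by
    rw [map_mul, map_one]
    exact mul_eq_left.1 (by rw [← mul_assoc, hm'])
  rw [hM.eq_one_of_mul_eq_one (of_injective hM this), map_one, mul_one]

theorem exists_isLUB_pair_of_of (hM : IsGarsideMonoid M) (a b : M) :
    ∃ w : M, IsLUB {of a, of b} (of w) := by
  obtain ⟨w, haw, hbw, hw_least⟩ := hM.joinL a b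
  refine ⟨w, ?_, fun k hk ↦ ?_⟩
  · rintro _ (rfl | rfl)
    exacts [(of_le_of_iff hM).2 haw, (of_le_of_iff hM).2 hbw]
  · have hak : of a ≤ k := hk (Set.mem_insert _ _)
    have hbk : of b ≤ k := hk (Set.mem_insert_of_mem _ rfl)
    obtain ⟨v, rfl⟩ := exists_eq_of_of_of_le hak
    rw [of_le_of_iff hM] at hak hbk ⊢
    exact hw_least v hak hbk

theorem exists_isLUB_pair (hM : IsGarsideMonoid M) (g h : FracGroup M) :
    ∃ j, IsLUB {g, h} j := by
  obtain ⟨a, b, hab⟩ := exists_inv_mul_eq hM (g⁻¹ * h)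
  obtain ⟨w, hw⟩ := exists_isLUB_pair_of_of hM a b
  have himage : OrderIso.mulLeft (g * (of a)⁻¹) '' {of a, of b} = {g, h} := by
    rw [Set.image_pair]
    simp [mul_assoc, hab]
  exact ⟨_, himage ▸ (OrderIso.mulLeft _).isLUB_image'.2 hw⟩

noncomputable instance [Fact (IsGarsideMonoid M)] : SemilatticeSup (FracGroup M) where
  le_antisymm _ _ := le_antisymm_of_isGarsideMonoid Fact.out
  sup g h := (exists_isLUB_pair Fact.out g h).choose
  le_sup_left g h := (exists_isLUB_pair Fact.out g h).choose_spec.1 (Set.mem_insert _ _)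
  le_sup_right g h := (exists_isLUB_pair Fact.out g h).choose_spec.1 (Set.mem_insert_of_mem _ rfl)
  sup_le g h _ hg hh := (exists_isLUB_pair Fact.out g h).choose_spec.2 <| by
    rintro _ (rfl | rfl) <;> assumption

end FracGroup

/-- Every Garside group is torsion free: if `G = G(M)` is the group of
fractions of a Garside monoid `M` and `α ∈ G` satisfies `α^n = 1` for some
`n ≥ 1`, then `α = 1`. -/
theorem garside_group_torsion_free {M : Type*} [Monoid M]
    (hM : IsGarsideMonoid M) (α : FracGroup M) (n : ℕ) (hn : 1 ≤ n)
    (h : α ^ n = 1) : α = 1 := by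
  have : Fact (IsGarsideMonoid M) := ⟨hM⟩
  have hα : IsOfFinOrder α := isOfFinOrder_iff_pow_eq_one.2 ⟨n, hn, h⟩
  have hfin : (Subgroup.zpowers α : Set (FracGroup M)).Finite :=
    hα.powers_eq_zpowers ▸ hα.finite_powers
  obtain ⟨β, hβ⟩ := hfin.exists_isLUB ⟨1, Subgroup.one_mem _⟩
  exact eq_one_of_isLUB_zpowers hβ
end

section
/- Let M be a monoid satisfying the Öre conditions (cancelative, and for all α, β ∈ M there exist α', β' with αα' = ββ'). Then the natural homomorphism ι : M → G(M) into its group of fractions is injective. -/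
/-- The natural homomorphism `ι : M → G(M)`. -/
def fracIota (M : Type*) [Monoid M] : M → FracGroup M :=
  fun a => PresentedGroup.of a

open MulOpposite in
/-- The top submonoid of `Mᵐᵒᵖ` is a (left) Ore set when `M` is cancelative and
satisfies the right Ore condition. -/
noncomputable def oreSetOfHyps {M : Type*} [Monoid M]
    (hcancel : ∀ a b b' c : M, a * b * c = a * b' * c → b = b')
    (hore : ∀ a b : M, ∃ a' b' : M, a * a' = b * b') :
    OreLocalization.OreSet (⊤ : Submonoid Mᵐᵒᵖ) where
  ore_right_cancel r₁ r₂ s h := by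
    refine ⟨1, ?_⟩
    have h' : unop s * unop r₁ * 1 = unop s * unop r₂ * 1 := by
      simpa using congrArg unop h
    have := hcancel (unop s) (unop r₁) (unop r₂) 1 h'
    simp [unop_injective this]
  oreNum r s := op (Classical.choose (Classical.choose_spec (hore (unop r) (unop (s : Mᵐᵒᵖ)))))
  oreDenom r s := ⟨op (Classical.choose (hore (unop r) (unop (s : Mᵐᵒᵖ)))), trivial⟩
  ore_eq r s := by
    apply unop_injective
    have := Classical.choose_spec (Classical.choose_spec (hore (unop r) (unop (s : Mᵐᵒᵖ))))
    simpa using this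

/-- If a monoid `M` satisfies the Öre conditions — it is cancelative, and any
two elements admit a common right multiple — then the natural homomorphism
`ι : M → G(M)` into its group of fractions is injective. -/
theorem ore_embeds_in_group_of_fractions {M : Type*} [Monoid M]
    (hcancel : ∀ a b b' c : M, a * b * c = a * b' * c → b = b')
    (hore : ∀ a b : M, ∃ a' b' : M, a * a' = b * b') :
    Function.Injective (fracIota M) := by
  classical
  letI := oreSetOfHyps hcancel hore
  let f : M → ((OreLocalization (⊤ : Submonoid Mᵐᵒᵖ) Mᵐᵒᵖ)ˣ)ᵐᵒᵖ := fun a =>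
    MulOpposite.op (OreLocalization.numerator_isUnit
      (⟨MulOpposite.op a, trivial⟩ : (⊤ : Submonoid Mᵐᵒᵖ))).unit
  have hf : ∀ a : M, ((f a).unop : OreLocalization (⊤ : Submonoid Mᵐᵒᵖ) Mᵐᵒᵖ) =
      OreLocalization.numeratorHom (MulOpposite.op a) := fun a => IsUnit.unit_spec _
  have hmul : ∀ a b : M, f a * f b = f (a * b) := by
    intro a b
    apply MulOpposite.unop_injective
    apply Units.ext
    show (((f b).unop * (f a).unop : _ˣ) : OreLocalization (⊤ : Submonoid Mᵐᵒᵖ) Mᵐᵒᵖ) = _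
    rw [Units.val_mul, hf, hf, hf (a * b), ← map_mul]
    rfl
  have hrels : ∀ r ∈ fracRels M, FreeGroup.lift f r = 1 := by
    intro r hr
    simp only [fracRels, Set.mem_iUnion, Set.mem_singleton_iff] at hr
    obtain ⟨a, b, rfl⟩ := hr
    simp only [map_mul, map_inv, FreeGroup.lift_apply_of]
    rw [hmul a b, mul_inv_cancel]
  have hinj : Function.Injective f := by
    intro a b hab
    have h1 : ((f a).unop : OreLocalization (⊤ : Submonoid Mᵐᵒᵖ) Mᵐᵒᵖ) =
        ((f b).unop : OreLocalization (⊤ : Submonoid Mᵐᵒᵖ) Mᵐᵒᵖ) := by rw [hab]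
    rw [hf a, hf b] at h1
    rw [OreLocalization.numeratorHom_apply, OreLocalization.numeratorHom_apply,
      OreLocalization.oreDiv_eq_iff] at h1
    obtain ⟨u, v, h2, h3⟩ := h1
    have hv : v = (u : Mᵐᵒᵖ) := by simpa using h3.symm
    rw [hv] at h2
    have h2' : (↑u : Mᵐᵒᵖ) * MulOpposite.op b = (↑u : Mᵐᵒᵖ) * MulOpposite.op a := h2
    have h4 : 1 * b * (MulOpposite.unop (u : Mᵐᵒᵖ)) = 1 * a * (MulOpposite.unop (u : Mᵐᵒᵖ)) := by
      simpa using congrArg MulOpposite.unop h2'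
    exact (hcancel 1 b a _ h4).symm
  intro x y hxy
  have : PresentedGroup.toGroup hrels (fracIota M x) = PresentedGroup.toGroup hrels (fracIota M y) := by
    rw [hxy]
  rw [show fracIota M x = PresentedGroup.of x from rfl,
    show fracIota M y = PresentedGroup.of y from rfl,
    PresentedGroup.toGroup.of, PresentedGroup.toGroup.of] at this
  exact hinj this
end

section
/- Let f : Σ × Σ → Σ* be a complement on a finite alphabet Σ, and suppose u, v ∈ Σ* are such that the left reversing complements u' = C_L^f(u, v) and v' = C_L^f(v, u) exist. Then u·u' and v·v' represent the same element of the monoid M_L^f = ⟨Σ | x f(x,y) = y f(y,x)⟩⁺. -/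
/-- A word on `Σ` viewed as a positive word on `Σ ⊔ Σ⁻¹` (letters `(true, a)`
are positive, letters `(false, a)` are the inverses `a⁻¹`). -/
def posWord {A : Type*} (l : List A) : List (Bool × A) :=
  l.map fun a => (true, a)

/-- The formal inverse `l⁻¹` of a word `l` on `Σ`: reverse the word and invert
each letter. -/
def negWord {A : Type*} (l : List A) : List (Bool × A) :=
  (l.map fun a => (false, a)).reverse

/-- One step of left `f`-reversing: a subword `x⁻¹ y` is replaced by
`f(x,y) · f(y,x)⁻¹`. -/
inductive RevL {A : Type*} (f : A → A → List A) :
    List (Bool × A) → List (Bool × A) → Prop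
  | step (w₁ w₂ : List (Bool × A)) (x y : A) :
      RevL f (w₁ ++ [(false, x), (true, y)] ++ w₂)
        (w₁ ++ posWord (f x y) ++ negWord (f y x) ++ w₂)

/-- A word on `Σ` as an element of the free monoid on `Σ`. -/
def wordM {A : Type*} (l : List A) : FreeMonoid A :=
  (l.map FreeMonoid.of).prod

/-- The congruence defining the monoid
`M_L^f = ⟨Σ | x·f(x,y) = y·f(y,x)⟩⁺` associated to a complement `f`. -/
def complCon {A : Type*} (f : A → A → List A) : Con (FreeMonoid A) :=
  conGen fun a b => ∃ x y : A, a = wordM (x :: f x y) ∧ b = wordM (y :: f y x)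

section Aux
variable {A : Type} (f : A → A → List A)

theorem wordM_append (l₁ l₂ : List A) : wordM (l₁ ++ l₂) = wordM l₁ * wordM l₂ := by
  simp [wordM]

def cl (l : List A) : (complCon f).Quotient := (complCon f).mk' (wordM l)

theorem cl_append (l₁ l₂ : List A) : cl f (l₁ ++ l₂) = cl f l₁ * cl f l₂ := by
  simp [cl, wordM_append]

theorem cl_rel (x y : A) : cl f (x :: f x y) = cl f (y :: f y x) := by
  have : (complCon f) (wordM (x :: f x y)) (wordM (y :: f y x)) :=
    ConGen.Rel.of _ _ ⟨x, y, rfl, rfl⟩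
  simpa [cl, Con.eq] using this

def Ew : List (Bool × A) → (complCon f).Quotient → (complCon f).Quotient → Prop
  | [], a, b => a = b
  | (true, y) :: w, a, b => Ew w (a * cl f [y]) b
  | (false, x) :: w, a, b => ∃ c, a = c * cl f [x] ∧ Ew w c b

theorem Ew_nil (a b : (complCon f).Quotient) : Ew f [] a b ↔ a = b := Iff.rfl

theorem Ew_append (w₁ w₂ : List (Bool × A)) (a b : (complCon f).Quotient) :
    Ew f (w₁ ++ w₂) a b ↔ ∃ c, Ew f w₁ a c ∧ Ew f w₂ c b := by
  induction w₁ generalizing a with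
  | nil =>
    simp only [List.nil_append, Ew_nil]
    constructor
    · intro h; exact ⟨a, rfl, h⟩
    · rintro ⟨c, rfl, h⟩; exact h
  | cons p w ih =>
    rw [List.cons_append]
    obtain ⟨(_|_), x⟩ := p
    · show (∃ c, a = c * cl f [x] ∧ Ew f (w ++ w₂) c b) ↔
        ∃ c, (∃ d, a = d * cl f [x] ∧ Ew f w d c) ∧ Ew f w₂ c b
      simp only [ih]
      constructor
      · rintro ⟨c, hc, d, h1, h2⟩; exact ⟨d, ⟨c, hc, h1⟩, h2⟩
      · rintro ⟨d, ⟨c, hc, h1⟩, h2⟩; exact ⟨c, hc, d, h1, h2⟩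
    · show Ew f (w ++ w₂) (a * cl f [x]) b ↔ _
      rw [ih]
      exact Iff.rfl

theorem cl_nil : cl f [] = 1 := by simp [cl, wordM]

theorem Ew_pos (l : List A) (a b : (complCon f).Quotient) :
    Ew f (posWord l) a b ↔ b = a * cl f l := by
  induction l generalizing a with
  | nil => rw [show posWord ([] : List A) = [] from rfl, Ew_nil, cl_nil, mul_one, eq_comm]
  | cons x l ih =>
    rw [show posWord (x :: l) = (true, x) :: posWord l from rfl]
    show Ew f (posWord l) (a * cl f [x]) b ↔ _
    rw [ih, show cl f (x :: l) = cl f [x] * cl f l from cl_append f [x] l, mul_assoc]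

theorem Ew_neg (l : List A) (a b : (complCon f).Quotient) :
    Ew f (negWord l) a b ↔ a = b * cl f l := by
  induction l generalizing b with
  | nil => rw [show negWord ([] : List A) = [] from rfl, Ew_nil, cl_nil, mul_one]
  | cons x l ih =>
    have h1 : negWord (x :: l) = negWord l ++ [(false, x)] := by simp [negWord]
    rw [h1, Ew_append]
    constructor
    · rintro ⟨c, hc, d, hd, he⟩
      have he' : d = b := he
      rw [ih] at hc
      rw [hc, hd, he', mul_assoc, show cl f [x] * cl f l = cl f (x :: l) from
        (cl_append f [x] l).symm]
    · rintro rfl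
      refine ⟨b * cl f [x], ?_, ⟨b, rfl, (rfl : b = b)⟩⟩
      rw [ih, mul_assoc, show cl f [x] * cl f l = cl f (x :: l) from (cl_append f [x] l).symm]

theorem Ew_step {w w' : List (Bool × A)} (h : RevL f w w')
    (a b : (complCon f).Quotient) (he : Ew f w a b) : Ew f w' a b := by
  obtain ⟨w₁, w₂, x, y⟩ := h
  rw [Ew_append] at he
  obtain ⟨c, h1, h2⟩ := he
  rw [Ew_append] at h1
  obtain ⟨e, he1, he2⟩ := h1
  obtain ⟨d, hd, h3⟩ := he2
  have h3' : d * cl f [y] = c := h3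
  rw [Ew_append]
  refine ⟨d * cl f [y], ?_, h3' ▸ h2⟩
  rw [Ew_append]
  refine ⟨e * cl f (f x y), ?_, ?_⟩
  · rw [Ew_append]
    exact ⟨e, he1, (Ew_pos f _ _ _).2 rfl⟩
  · rw [Ew_neg, hd, mul_assoc, mul_assoc,
      show cl f [x] * cl f (f x y) = cl f (x :: f x y) from (cl_append f [x] (f x y)).symm,
      show cl f [y] * cl f (f y x) = cl f (y :: f y x) from (cl_append f [y] (f y x)).symm,
      cl_rel f x y]

end Aux

/-- Let `f` be a complement on a finite alphabet `Σ` and suppose that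
`u⁻¹ v` left-reverses to the reduced word `v' (u')⁻¹`, i.e. the left reversing
complements `u' = C_L^f(u,v)` and `v' = C_L^f(v,u)` exist.  Then
`u·C_L^f(u,v) ≡_L^f v·C_L^f(v,u)`: the words `u v'` and `v u'` represent the
same element of the monoid `M_L^f`. -/
theorem reversing_complements_equiv {A : Type} [Fintype A]
    (f : A → A → List A) (hf : ∀ x, f x x = [])
    (u v u' v' : List A)
    (h : Relation.ReflTransGen (RevL f) (negWord u ++ posWord v)
      (posWord v' ++ negWord u')) :
    (complCon f).mk' (wordM (u ++ v')) = (complCon f).mk' (wordM (v ++ u')) := by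
  have init : Ew f (negWord u ++ posWord v) (cl f u) (cl f v) := by
    rw [Ew_append]
    exact ⟨1, (Ew_neg f _ _ _).2 (one_mul _).symm, (Ew_pos f _ _ _).2 (one_mul _).symm⟩
  have fin : ∀ w, Relation.ReflTransGen (RevL f) (negWord u ++ posWord v) w →
      Ew f w (cl f u) (cl f v) := by
    intro w hw
    induction hw with
    | refl => exact init
    | tail _ hstep ih => exact Ew_step f hstep _ _ ih
  have fin' := fin _ h
  rw [Ew_append] at fin'
  obtain ⟨c, h1, h2⟩ := fin'
  rw [Ew_pos] at h1
  rw [Ew_neg] at h2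
  have key : cl f (u ++ v') = cl f (v ++ u') := by
    rw [cl_append, cl_append, ← h1, h2]
  simpa [cl] using key
end
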